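/- arXiv:2509.11160 — 4 statements merged into one kernel-verified Lean document; each statement's English description precedes it below -/
import Mathlib

section
/- Let B : ℝ³ → ℝ³ be a smooth vector field, and for smooth functions f, g : ℝ³ × ℝ³ → ℝ define the magnetized bracket {f, g}(x, v) = ∇ₓf · ∇ᵥg − ∇ᵥf · ∇ₓg + B(x) · (∇ᵥf × ∇ᵥg). Then for all smooth f, g, h, the cyclic Jacobi sum {{f, g}, h} + {{g, h}, f} + {{h, f}, g} equals, at every point (x, v), (div B)(x) · (∇ᵥf · (∇ᵥg × ∇ᵥh))(x, v). -/
open scoped BigOperators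
open MeasureTheory

noncomputable section

/-- Vectors in ℝ³. -/
abbrev V3 : Type := Fin 3 → ℝ

/-- Euclidean inner product on ℝ³. -/
def dot3 (a b : V3) : ℝ := ∑ i, a i * b i

/-- Cross product on ℝ³. -/
def cross3 (a b : V3) : V3 := crossProduct a b

/-- Partial derivative in direction `i`. -/
def pd (i : Fin 3) (f : V3 → ℝ) (x : V3) : ℝ := fderiv ℝ f x (Pi.single i 1)

/-- Gradient on ℝ³. -/
def grad3 (f : V3 → ℝ) (x : V3) : V3 := fun i => pd i f x

/-- Divergence of a vector field on ℝ³. -/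
def div3 (X : V3 → V3) (x : V3) : ℝ := ∑ i, pd i (fun y => X y i) x

/-- Curl of a vector field on ℝ³. -/
def curl3 (X : V3 → V3) (x : V3) : V3 :=
  ![pd 1 (fun y => X y 2) x - pd 2 (fun y => X y 1) x,
    pd 2 (fun y => X y 0) x - pd 0 (fun y => X y 2) x,
    pd 0 (fun y => X y 1) x - pd 1 (fun y => X y 0) x]

/-- Gradient in the position variable of a phase-space function. -/
def gradx (f : V3 × V3 → ℝ) (p : V3 × V3) : V3 :=
  fun i => fderiv ℝ f p (Pi.single i 1, 0)

/-- Gradient in the velocity (or momentum) variable of a phase-space function. -/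
def gradv (f : V3 × V3 → ℝ) (p : V3 × V3) : V3 :=
  fun i => fderiv ℝ f p (0, Pi.single i 1)

/-- Canonical phase-space bracket `∇ₓf · ∇ᵥg − ∇ᵥf · ∇ₓg`. -/
def pb (f g : V3 × V3 → ℝ) (p : V3 × V3) : ℝ :=
  dot3 (gradx f p) (gradv g p) - dot3 (gradv f p) (gradx g p)

/-- Magnetized bracket `{f,g} = ∇ₓf·∇ᵥg − ∇ᵥf·∇ₓg + B(x)·(∇ᵥf × ∇ᵥg)`. -/
def mb (B : V3 → V3) (f g : V3 × V3 → ℝ) (p : V3 × V3) : ℝ :=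
  pb f g p + dot3 (B p.1) (cross3 (gradv f p) (gradv g p))

/-! The magnetized bracket is `{f, g} = df (P dg)` for the field of linear maps
`P_q : T*_q → T_q`, `P_q α = (∇ᵥα, -∇ₓα + ∇ᵥα × B(x))`, which is antisymmetric. For any
antisymmetric bivector field, the second derivatives of `f, g, h` cancel from the cyclic Jacobi
sum by symmetry of the Hessians, leaving the Schouten term `Σ_cyc df ((DP (P dh)) dg)`. As `P`
depends on `q` only through `B(x)`, this term is `Σ_cyc ∇ᵥf · (∇ᵥg × DB ∇ᵥh)`, and for every
linear map `L` of ℝ³, `a · (b × L c) + b · (c × L a) + c · (a × L b) = tr L · a · (b × c)`,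
with `tr DB = div B`. -/

section Bivector

variable {E : Type*} [NormedAddCommGroup E] [NormedSpace ℝ E]

def bivectorBracket (P : E → (E →L[ℝ] ℝ) →L[ℝ] E) (f g : E → ℝ) (p : E) : ℝ :=
  fderiv ℝ f p (P p (fderiv ℝ g p))

variable {P : E → (E →L[ℝ] ℝ) →L[ℝ] E} {f g h : E → ℝ} {p : E}

theorem fderiv_bivectorBracket_apply (hP : DifferentiableAt ℝ P p)
    (hf : DifferentiableAt ℝ (fderiv ℝ f) p) (hg : DifferentiableAt ℝ (fderiv ℝ g) p) (v : E) :
    fderiv ℝ (bivectorBracket P f g) p v =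
      fderiv ℝ (fderiv ℝ f) p v (P p (fderiv ℝ g p)) + fderiv ℝ f p (fderiv ℝ P p v (fderiv ℝ g p))
        + fderiv ℝ f p (P p (fderiv ℝ (fderiv ℝ g) p v)) := by
  unfold bivectorBracket
  rw [fderiv_clm_apply hf (hP.clm_apply hg), fderiv_clm_apply hP hg]
  simp only [add_apply, ContinuousLinearMap.comp_apply, ContinuousLinearMap.flip_apply, map_add]
  ring

theorem bivectorBracket_jacobi (hP : DifferentiableAt ℝ P p)
    (hanti : ∀ α β : E →L[ℝ] ℝ, α (P p β) = -β (P p α))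
    (hf : ContDiffAt ℝ 2 f p) (hg : ContDiffAt ℝ 2 g p) (hh : ContDiffAt ℝ 2 h p) :
    bivectorBracket P (bivectorBracket P f g) h p + bivectorBracket P (bivectorBracket P g h) f p
        + bivectorBracket P (bivectorBracket P h f) g p =
      fderiv ℝ f p (fderiv ℝ P p (P p (fderiv ℝ h p)) (fderiv ℝ g p))
        + fderiv ℝ g p (fderiv ℝ P p (P p (fderiv ℝ f p)) (fderiv ℝ h p))
        + fderiv ℝ h p (fderiv ℝ P p (P p (fderiv ℝ g p)) (fderiv ℝ f p)) := by
  have hD : ∀ {u : E → ℝ}, ContDiffAt ℝ 2 u p → DifferentiableAt ℝ (fderiv ℝ u) p := fun hu =>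
    (hu.fderiv_right (m := 1) (by norm_num)).differentiableAt (by norm_num)
  have hS : ∀ {u : E → ℝ}, ContDiffAt ℝ 2 u p → IsSymmSndFDerivAt ℝ u p := fun hu =>
    hu.isSymmSndFDerivAt (by simp)
  show fderiv ℝ (bivectorBracket P f g) p (P p (fderiv ℝ h p))
      + fderiv ℝ (bivectorBracket P g h) p (P p (fderiv ℝ f p))
      + fderiv ℝ (bivectorBracket P h f) p (P p (fderiv ℝ g p)) = _
  rw [fderiv_bivectorBracket_apply hP (hD hf) (hD hg),
    fderiv_bivectorBracket_apply hP (hD hg) (hD hh),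
    fderiv_bivectorBracket_apply hP (hD hh) (hD hf)]
  set D2f := fderiv ℝ (fderiv ℝ f) p
  set D2g := fderiv ℝ (fderiv ℝ g) p
  set D2h := fderiv ℝ (fderiv ℝ h) p
  linear_combination hanti (fderiv ℝ f p) (D2g (P p (fderiv ℝ h p)))
    + hanti (fderiv ℝ g p) (D2h (P p (fderiv ℝ f p)))
    + hanti (fderiv ℝ h p) (D2f (P p (fderiv ℝ g p)))
    + hS hf (P p (fderiv ℝ h p)) (P p (fderiv ℝ g p))
    + hS hg (P p (fderiv ℝ f p)) (P p (fderiv ℝ h p))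
    + hS hh (P p (fderiv ℝ g p)) (P p (fderiv ℝ f p))

end Bivector

open Matrix

def velGrad : (V3 × V3 →L[ℝ] ℝ) →L[ℝ] V3 :=
  ContinuousLinearMap.pi fun i => ContinuousLinearMap.apply ℝ ℝ (0, Pi.single i 1)

def posGrad : (V3 × V3 →L[ℝ] ℝ) →L[ℝ] V3 :=
  ContinuousLinearMap.pi fun i => ContinuousLinearMap.apply ℝ ℝ (Pi.single i 1, 0)

def crossRightL : V3 →L[ℝ] V3 →L[ℝ] V3 :=
  LinearMap.toContinuousLinearMap
    (LinearMap.toContinuousLinearMap.toLinearMap ∘ₗ (crossProduct (R := ℝ)).flip)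

theorem dot3_eq_dotProduct (a b : V3) : dot3 a b = a ⬝ᵥ b := rfl

theorem cross3_eq_crossProduct (a b : V3) : cross3 a b = a ⨯₃ b := rfl

theorem gradx_eq_posGrad (f : V3 × V3 → ℝ) (p : V3 × V3) : gradx f p = posGrad (fderiv ℝ f p) := rfl

theorem gradv_eq_velGrad (f : V3 × V3 → ℝ) (p : V3 × V3) : gradv f p = velGrad (fderiv ℝ f p) := rfl

def lorentzSharp : V3 →L[ℝ] (V3 × V3 →L[ℝ] ℝ) →L[ℝ] V3 × V3 :=
  (ContinuousLinearMap.compL ℝ (V3 × V3 →L[ℝ] ℝ) V3 (V3 × V3) (.inr ℝ V3 V3)).comp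
    (((ContinuousLinearMap.compL ℝ (V3 × V3 →L[ℝ] ℝ) V3 V3).flip velGrad).comp crossRightL)

def magneticSharp (B : V3 → V3) (q : V3 × V3) : (V3 × V3 →L[ℝ] ℝ) →L[ℝ] V3 × V3 :=
  velGrad.prod (-posGrad) + lorentzSharp (B q.1)

theorem apply_prod_mk (L : V3 × V3 →L[ℝ] ℝ) (u w : V3) :
    L (u, w) = posGrad L ⬝ᵥ u + velGrad L ⬝ᵥ w := by
  have hsplit : (u, w) = ∑ i, (u i • ((Pi.single i 1 : V3), (0 : V3))
      + w i • ((0 : V3), (Pi.single i 1 : V3))) := by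
    ext j <;> simp [Prod.fst_sum, Prod.snd_sum, Pi.single_apply]
  rw [hsplit, map_sum]
  simp only [map_add, map_smul, smul_eq_mul, Finset.sum_add_distrib]
  simp [dotProduct, mul_comm, posGrad, velGrad]

theorem magneticSharp_apply (B : V3 → V3) (q : V3 × V3) (α : V3 × V3 →L[ℝ] ℝ) :
    magneticSharp B q α = (velGrad α, -posGrad α + velGrad α ⨯₃ B q.1) := by
  simp [magneticSharp, lorentzSharp, crossRightL]

theorem magneticSharp_antisymm (B : V3 → V3) (q : V3 × V3) (α β : V3 × V3 →L[ℝ] ℝ) :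
    α (magneticSharp B q β) = -β (magneticSharp B q α) := by
  have hcross : velGrad α ⬝ᵥ velGrad β ⨯₃ B q.1 = -(velGrad β ⬝ᵥ velGrad α ⨯₃ B q.1) := by
    rw [triple_product_permutation, ← cross_anticomm, dotProduct_neg, ← triple_product_permutation]
  simp only [magneticSharp_apply, apply_prod_mk, dotProduct_add, dotProduct_neg]
  rw [dotProduct_comm (velGrad β), dotProduct_comm (velGrad α) (posGrad β)]
  linear_combination hcross

theorem mb_eq_bivectorBracket (B : V3 → V3) (f g : V3 × V3 → ℝ) :
    mb B f g = bivectorBracket (magneticSharp B) f g := by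
  funext q
  simp only [mb, pb, bivectorBracket, magneticSharp_apply, apply_prod_mk, dot3_eq_dotProduct,
    cross3_eq_crossProduct, gradx_eq_posGrad, gradv_eq_velGrad, dotProduct_add, dotProduct_neg,
    triple_product_permutation (B q.1)]
  ring

theorem hasFDerivAt_magneticSharp {B : V3 → V3} {q : V3 × V3} (hB : DifferentiableAt ℝ B q.1) :
    HasFDerivAt (magneticSharp B)
      (lorentzSharp.comp ((fderiv ℝ B q.1).comp (ContinuousLinearMap.fst ℝ V3 V3))) q := by
  exact (lorentzSharp.hasFDerivAt.comp q (hB.hasFDerivAt.comp q hasFDerivAt_fst)).const_add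
    (velGrad.prod (-posGrad))

theorem cyclic_triple_product_map_eq_trace_mul {R : Type*} [CommRing R]
    (L : (Fin 3 → R) →ₗ[R] Fin 3 → R) (a b c : Fin 3 → R) :
    a ⬝ᵥ b ⨯₃ L c + b ⬝ᵥ c ⨯₃ L a + c ⬝ᵥ a ⨯₃ L b = LinearMap.trace R _ L * a ⬝ᵥ b ⨯₃ c := by
  rw [LinearMap.trace_eq_matrix_trace R (Pi.basisFun R (Fin 3)), LinearMap.toMatrix_eq_toMatrix',
    ← L.toMatrix'_mulVec a, ← L.toMatrix'_mulVec b, ← L.toMatrix'_mulVec c]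
  generalize LinearMap.toMatrix' L = M
  simp [Matrix.mulVec, dotProduct, cross_apply, Fin.sum_univ_three, Matrix.trace]
  ring

theorem div3_eq_trace_fderiv {B : V3 → V3} {x : V3} (hB : DifferentiableAt ℝ B x) :
    div3 B x = LinearMap.trace ℝ V3 (fderiv ℝ B x) := by
  rw [LinearMap.trace_eq_matrix_trace ℝ (Pi.basisFun ℝ (Fin 3))]
  simp [div3, pd, Matrix.trace, (hasFDerivAt_pi'.1 hB.hasFDerivAt _).fderiv]

theorem apply_fderiv_magneticSharp {B : V3 → V3} {q : V3 × V3} (hB : DifferentiableAt ℝ B q.1)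
    (α β γ : V3 × V3 →L[ℝ] ℝ) :
    α (fderiv ℝ (magneticSharp B) q (magneticSharp B q β) γ)
      = velGrad α ⬝ᵥ velGrad γ ⨯₃ fderiv ℝ B q.1 (velGrad β) := by
  rw [(hasFDerivAt_magneticSharp hB).fderiv]
  simp [lorentzSharp, crossRightL, magneticSharp_apply, apply_prod_mk]

/-- The Jacobi defect of the magnetized bracket equals (div B) (∇ᵥf · (∇ᵥg × ∇ᵥh)). -/
theorem magnetized_jacobi_defect (B : V3 → V3) (hB : ContDiff ℝ (⊤ : ℕ∞) B)
    (f g h : V3 × V3 → ℝ)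
    (hf : ContDiff ℝ (⊤ : ℕ∞) f) (hg : ContDiff ℝ (⊤ : ℕ∞) g) (hh : ContDiff ℝ (⊤ : ℕ∞) h)
    (p : V3 × V3) :
    mb B (mb B f g) h p + mb B (mb B g h) f p + mb B (mb B h f) g p
      = div3 B p.1 * dot3 (gradv f p) (cross3 (gradv g p) (gradv h p)) := by
  have hB' : DifferentiableAt ℝ B p.1 := hB.differentiable (by simp) p.1
  have h2 : ∀ {u : V3 × V3 → ℝ}, ContDiff ℝ (⊤ : ℕ∞) u → ContDiffAt ℝ 2 u p := fun hu =>
    (hu.of_le (WithTop.coe_le_coe.2 le_top)).contDiffAt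
  simp only [mb_eq_bivectorBracket]
  rw [bivectorBracket_jacobi (hasFDerivAt_magneticSharp hB').differentiableAt
    (magneticSharp_antisymm B p) (h2 hf) (h2 hg) (h2 hh)]
  simp only [apply_fderiv_magneticSharp hB', div3_eq_trace_fderiv hB']
  exact cyclic_triple_product_map_eq_trace_mul _ _ _ _
end
end

section
/- Let B : ℝ³ → ℝ³ be a smooth vector field and define the magnetized bracket {f, g}(x, v) = ∇ₓf · ∇ᵥg − ∇ᵥf · ∇ₓg + B(x) · (∇ᵥf × ∇ᵥg). If the Jacobi identity {{f, g}, h} + {{g, h}, f} + {{h, f}, g} = 0 holds for all smooth functions f, g, h : ℝ³ × ℝ³ → ℝ, then div B vanishes identically. -/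
open scoped BigOperators
open MeasureTheory

noncomputable section

/-! Test the Jacobi identity on the velocity coordinates `vᵢ`. Since `vᵢ` has no `x`-dependence
and `∇ᵥ vᵢ = eᵢ`, the bracket `{v_{a+1}, v_{a+2}} = B(x) · (e_{a+1} × e_{a+2})` is `B_a(x)`,
and `{g(x), v_a} = ∂_a g`. Hence the cyclic Jacobi sum for
`(v₁, v₂, v₀)` is `∑ₐ ∂_a B_a = div B`. -/

theorem fderiv_comp_fst {𝕜 E F G : Type*} [NontriviallyNormedField 𝕜]
    [NormedAddCommGroup E] [NormedSpace 𝕜 E] [NormedAddCommGroup F] [NormedSpace 𝕜 F]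
    [NormedAddCommGroup G] [NormedSpace 𝕜 G] (f : E → G) (p : E × F) :
    fderiv 𝕜 (fun q : E × F => f q.1) p = (fderiv 𝕜 f p.1).comp (.fst 𝕜 E F) := by
  by_cases hf : DifferentiableAt 𝕜 f p.1
  · exact (hf.hasFDerivAt.comp p hasFDerivAt_fst).fderiv
  · -- `f` is recovered from `f ∘ fst` along the slice `x ↦ (x, p.2)`
    have hfst : ¬ DifferentiableAt 𝕜 (fun q : E × F => f q.1) p := by
      intro h
      exact hf (h.comp (f := fun x : E => (x, p.2)) p.1
        (differentiableAt_id.prodMk (differentiableAt_const p.2)))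
    simp [fderiv_zero_of_not_differentiableAt hf, fderiv_zero_of_not_differentiableAt hfst]

lemma gradx_comp_fst (f : V3 → ℝ) (p : V3 × V3) :
    gradx (fun q => f q.1) p = grad3 f p.1 := by
  ext i
  simp [gradx, grad3, pd, fderiv_comp_fst]

lemma gradv_comp_fst (f : V3 → ℝ) (p : V3 × V3) :
    gradv (fun q => f q.1) p = 0 := by
  ext i
  simp [gradv, fderiv_comp_fst]

lemma fderiv_velocity (i : Fin 3) (p : V3 × V3) :
    fderiv ℝ (fun q : V3 × V3 => q.2 i) p = (ContinuousLinearMap.proj i).comp (.snd ℝ V3 V3) :=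
  ((ContinuousLinearMap.proj i).comp (.snd ℝ V3 V3)).fderiv

lemma gradx_velocity (i : Fin 3) (p : V3 × V3) :
    gradx (fun q => q.2 i) p = 0 := by
  ext j
  simp [gradx, fderiv_velocity]

lemma gradv_velocity (i : Fin 3) (p : V3 × V3) :
    gradv (fun q => q.2 i) p = Pi.single i 1 := by
  ext j
  simp [gradv, fderiv_velocity, Pi.single_apply, eq_comm]

lemma dot3_cross3_single_add_one_add_two (u : V3) (a : Fin 3) :
    dot3 u (cross3 (Pi.single (a + 1) 1) (Pi.single (a + 2) 1)) = u a := by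
  fin_cases a <;> simp [dot3, cross3, cross_apply, Fin.sum_univ_three]

lemma mb_velocity_add_one_add_two (B : V3 → V3) (a : Fin 3) :
    mb B (fun q => q.2 (a + 1)) (fun q => q.2 (a + 2)) = fun q => B q.1 a := by
  ext q
  simp only [mb, pb, gradx_velocity, gradv_velocity, dot3_cross3_single_add_one_add_two]
  simp [dot3]

lemma mb_comp_fst_velocity (B : V3 → V3) (f : V3 → ℝ) (k : Fin 3) (p : V3 × V3) :
    mb B (fun q => f q.1) (fun q => q.2 k) p = pd k f p.1 := by
  simp [mb, pb, gradx_comp_fst, gradv_comp_fst, gradx_velocity, gradv_velocity, dot3, cross3,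
    grad3, Pi.single_apply]

lemma sum_mb_mb_velocity_eq_div3 (B : V3 → V3) (p : V3 × V3) :
    ∑ a : Fin 3, mb B (mb B (fun q => q.2 (a + 1)) (fun q => q.2 (a + 2))) (fun q => q.2 a) p =
      div3 B p.1 := by
  simp only [mb_velocity_add_one_add_two, div3]
  exact Finset.sum_congr rfl fun a _ => mb_comp_fst_velocity B (fun x => B x a) a p

theorem divFree_of_magnetized_jacobi_general (B : V3 → V3)
    (hJac : ∀ f g h : V3 × V3 → ℝ,
      ContDiff ℝ (⊤ : ℕ∞) f → ContDiff ℝ (⊤ : ℕ∞) g → ContDiff ℝ (⊤ : ℕ∞) h →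
      ∀ p : V3 × V3, mb B (mb B f g) h p + mb B (mb B g h) f p + mb B (mb B h f) g p = 0) :
    ∀ x, div3 B x = 0 := by
  intro x
  have hv (i : Fin 3) : ContDiff ℝ (⊤ : ℕ∞) (fun q : V3 × V3 => q.2 i) :=
    (contDiff_apply ℝ ℝ i).comp contDiff_snd
  calc div3 B x
      = ∑ a : Fin 3, mb B (mb B (fun q => q.2 (a + 1)) (fun q => q.2 (a + 2))) (fun q => q.2 a)
          (x, 0) := (sum_mb_mb_velocity_eq_div3 B (x, 0)).symm
    _ = 0 := by
      rw [Fin.sum_univ_three]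
      exact hJac _ _ _ (hv 1) (hv 2) (hv 0) (x, 0)

/-- If the magnetized bracket satisfies the Jacobi identity for all smooth functions,
then div B vanishes identically. -/
theorem divFree_of_magnetized_jacobi (B : V3 → V3) (hB : ContDiff ℝ (⊤ : ℕ∞) B)
    (hJac : ∀ f g h : V3 × V3 → ℝ,
      ContDiff ℝ (⊤ : ℕ∞) f → ContDiff ℝ (⊤ : ℕ∞) g → ContDiff ℝ (⊤ : ℕ∞) h →
      ∀ p : V3 × V3, mb B (mb B f g) h p + mb B (mb B g h) f p + mb B (mb B h f) g p = 0) :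
    ∀ x, div3 B x = 0 :=
  divFree_of_magnetized_jacobi_general B hJac
end
end

section
/- For any vector b ∈ ℝ³ and smooth functions f, g, h : ℝ³ → ℝ, the cyclic sum b · (∇(b · (∇f × ∇g)) × ∇h) + b · (∇(b · (∇g × ∇h)) × ∇f) + b · (∇(b · (∇h × ∇f)) × ∇g) vanishes identically. -/
open scoped BigOperators
open MeasureTheory

noncomputable section

/-!
Write `{u, v} = b · (∇u × ∇v)`. By the triple product this is `du (J dv)` for the constant map
`J ℓ = ∇ℓ × b`, which is skew (`ℓ (J m) = -m (J ℓ)`), so the cyclic sum is the Jacobiator of a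
constant Poisson structure. Differentiating `du (J dv)` and moving the second derivative across `J`
by skewness gives `{{f, g}, h} = D²f (X_h, X_g) - D²g (X_h, X_f)` with `X_u = J du`; in the cyclic
sum the six Hessian terms cancel in pairs by the symmetry of second derivatives.
-/

section ConstantPoissonStructure

variable {E : Type*} [NormedAddCommGroup E] [NormedSpace ℝ E]

def poissonBracket (J : StrongDual ℝ E →L[ℝ] E) (f g : E → ℝ) (x : E) : ℝ :=
  fderiv ℝ f x (J (fderiv ℝ g x))

theorem fderiv_poissonBracket_apply (J : StrongDual ℝ E →L[ℝ] E) {f g : E → ℝ}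
    (hf : ContDiff ℝ 2 f) (hg : ContDiff ℝ 2 g) (x w : E) :
    fderiv ℝ (poissonBracket J f g) x w =
      fderiv ℝ (fderiv ℝ f) x w (J (fderiv ℝ g x)) +
        fderiv ℝ f x (J (fderiv ℝ (fderiv ℝ g) x w)) := by
  have hf' := (hf.fderiv_right (m := 1) le_rfl).differentiable one_ne_zero x
  have hg' := (hg.fderiv_right (m := 1) le_rfl).differentiable one_ne_zero x
  change fderiv ℝ (fun y => fderiv ℝ f y ((J ∘ fderiv ℝ g) y)) x w = _
  rw [(hf'.hasFDerivAt.clm_apply (J.hasFDerivAt.comp x hg'.hasFDerivAt)).fderiv]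
  simp only [Function.comp_apply, add_apply, ContinuousLinearMap.comp_apply,
    ContinuousLinearMap.flip_apply, add_comm]

theorem poissonBracket_poissonBracket (J : StrongDual ℝ E →L[ℝ] E)
    (hJ : ∀ ℓ m : StrongDual ℝ E, ℓ (J m) = -m (J ℓ)) {f g : E → ℝ}
    (hf : ContDiff ℝ 2 f) (hg : ContDiff ℝ 2 g) (h : E → ℝ) (x : E) :
    poissonBracket J (poissonBracket J f g) h x =
      fderiv ℝ (fderiv ℝ f) x (J (fderiv ℝ h x)) (J (fderiv ℝ g x)) -
        fderiv ℝ (fderiv ℝ g) x (J (fderiv ℝ h x)) (J (fderiv ℝ f x)) := by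
  rw [poissonBracket, fderiv_poissonBracket_apply J hf hg, hJ (fderiv ℝ f x)]
  ring

theorem poissonBracket_jacobi (J : StrongDual ℝ E →L[ℝ] E)
    (hJ : ∀ ℓ m : StrongDual ℝ E, ℓ (J m) = -m (J ℓ)) {f g h : E → ℝ}
    (hf : ContDiff ℝ 2 f) (hg : ContDiff ℝ 2 g) (hh : ContDiff ℝ 2 h) (x : E) :
    poissonBracket J (poissonBracket J f g) h x + poissonBracket J (poissonBracket J g h) f x +
      poissonBracket J (poissonBracket J h f) g x = 0 := by
  have isSymm {u : E → ℝ} (hu : ContDiff ℝ 2 u) : IsSymmSndFDerivAt ℝ u x :=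
    hu.contDiffAt.isSymmSndFDerivAt (by simp)
  rw [poissonBracket_poissonBracket J hJ hf hg, poissonBracket_poissonBracket J hJ hg hh,
    poissonBracket_poissonBracket J hJ hh hf, (isSymm hf).eq, (isSymm hg).eq, (isSymm hh).eq]
  ring

end ConstantPoissonStructure

theorem ContinuousLinearMap.apply_eq_dotProduct {R n : Type*} [CommSemiring R]
    [TopologicalSpace R] [Fintype n] [DecidableEq n] (ℓ : (n → R) →L[R] R) (w : n → R) :
    ℓ w = (fun i => ℓ (Pi.single i 1)) ⬝ᵥ w := by
  conv_lhs => rw [pi_eq_sum_univ' w, map_sum]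
  simp [dotProduct, mul_comm]

def crossPoissonTensor (b : V3) : StrongDual ℝ V3 →L[ℝ] V3 :=
  (LinearMap.toContinuousLinearMap (crossProduct.flip b)).comp
    (ContinuousLinearMap.pi fun i => ContinuousLinearMap.apply ℝ ℝ (Pi.single i 1))

theorem crossPoissonTensor_apply (b : V3) (ℓ : StrongDual ℝ V3) :
    crossPoissonTensor b ℓ = crossProduct (fun i => ℓ (Pi.single i 1)) b := rfl

theorem crossPoissonTensor_skew (b : V3) (ℓ m : StrongDual ℝ V3) :
    ℓ (crossPoissonTensor b m) = -m (crossPoissonTensor b ℓ) := by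
  rw [crossPoissonTensor_apply, crossPoissonTensor_apply, ℓ.apply_eq_dotProduct,
    m.apply_eq_dotProduct, triple_product_permutation, ← dotProduct_neg, cross_anticomm]

theorem dot3_cross3_grad3 (b : V3) (u v : V3 → ℝ) (x : V3) :
    dot3 b (cross3 (grad3 u x) (grad3 v x)) = poissonBracket (crossPoissonTensor b) u v x := by
  rw [poissonBracket, crossPoissonTensor_apply, ContinuousLinearMap.apply_eq_dotProduct]
  exact triple_product_permutation b _ _

/-- The fB² cyclic cancellation: for a constant vector b and smooth f, g, h,
the cyclic sum b·(∇(b·(∇f × ∇g)) × ∇h) + cyc vanishes. -/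
theorem fB2_cyclic_vanishes (b : V3) (f g h : V3 → ℝ)
    (hf : ContDiff ℝ (⊤ : ℕ∞) f) (hg : ContDiff ℝ (⊤ : ℕ∞) g) (hh : ContDiff ℝ (⊤ : ℕ∞) h)
    (x : V3) :
    dot3 b (cross3 (grad3 (fun y => dot3 b (cross3 (grad3 f y) (grad3 g y))) x) (grad3 h x))
      + dot3 b (cross3 (grad3 (fun y => dot3 b (cross3 (grad3 g y) (grad3 h y))) x) (grad3 f x))
      + dot3 b (cross3 (grad3 (fun y => dot3 b (cross3 (grad3 h y) (grad3 f y))) x) (grad3 g x))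
      = 0 := by
  have two_le : ((2 : ℕ∞) : WithTop ℕ∞) ≤ (⊤ : ℕ∞) := by exact_mod_cast le_top
  simp only [dot3_cross3_grad3]
  exact poissonBracket_jacobi (crossPoissonTensor b) (crossPoissonTensor_skew b)
    (hf.of_le two_le) (hg.of_le two_le) (hh.of_le two_le) x
end
end

section
/- For smooth compactly supported vector fields F, G, K, B : ℝ³ → ℝ³ and a smooth strictly positive function n : ℝ³ → ℝ, the cyclic sum over (F, G, K) of ∫_{ℝ³} (1/n²) [ −(B · (F × G)) (div K) + (1/2) B · (K × curl(F × G)) + (1/2) (F × G) · curl(B × K) ] dx equals −∫_{ℝ³} (1/n²) (div B) (K · (F × G)) dx. -/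
open scoped BigOperators
open MeasureTheory

noncomputable section

/-- The 'fourth term' (fffB/n²) integral of the xvB Jacobi proof. -/
def S16 (n : V3 → ℝ) (B F G K : V3 → V3) : ℝ :=
  ∫ x, (1 / (n x) ^ 2) *
    (-(dot3 (B x) (cross3 (F x) (G x))) * div3 K x
      + (1 / 2) * dot3 (B x) (cross3 (K x) (curl3 (fun y => cross3 (F y) (G y)) x))
      + (1 / 2) * dot3 (cross3 (F x) (G x)) (curl3 (fun y => cross3 (B y) (K y)) x))

/-! For any C¹ weight `m` (here `m = 1/n²`), the cyclic sum of the integrands plus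
`m (div B) K·(F×G)` is, pointwise, the divergence of an explicit vector field that vanishes
wherever `B` does. That field has compact support, so its divergence integrates to zero and only
the `div B` term survives. -/

section IntegrationByParts

variable {E : Type*} [NormedAddCommGroup E] [NormedSpace ℝ E] [MeasurableSpace E] [BorelSpace E]
  {μ : Measure E}

theorem HasCompactSupport.integrable_fderiv_apply [IsFiniteMeasureOnCompacts μ] {f : E → ℝ}
    (hfs : HasCompactSupport f) (hf : ContDiff ℝ 1 f) (v : E) :
    Integrable (fun x => fderiv ℝ f x v) μ :=
  (hf.continuous_fderiv_apply one_ne_zero).comp (continuous_id.prodMk continuous_const)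
    |>.integrable_of_hasCompactSupport (hfs.fderiv_apply ℝ v)

theorem HasCompactSupport.integral_fderiv_apply_eq_zero [FiniteDimensional ℝ E]
    [μ.IsAddHaarMeasure] {f : E → ℝ} (hfs : HasCompactSupport f) (hf : ContDiff ℝ 1 f) (v : E) :
    ∫ x, fderiv ℝ f x v ∂μ = 0 := by
  simpa using integral_mul_fderiv_eq_neg_fderiv_mul_of_integrable (μ := μ)
    (f := fun _ => (1 : ℝ)) (g := f) (v := v) (by simp)
    (by simpa using hfs.integrable_fderiv_apply hf v)
    (by simpa using hf.continuous.integrable_of_hasCompactSupport hfs)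
    (fun _ _ => differentiableAt_const _) (fun x _ => hf.differentiable one_ne_zero x)

end IntegrationByParts

theorem cross3_apply_zero (a b : V3) : cross3 a b 0 = a 1 * b 2 - a 2 * b 1 := by
  simp [cross3, cross_apply]

theorem cross3_apply_one (a b : V3) : cross3 a b 1 = a 2 * b 0 - a 0 * b 2 := by
  simp [cross3, cross_apply]

theorem cross3_apply_two (a b : V3) : cross3 a b 2 = a 0 * b 1 - a 1 * b 0 := by
  simp [cross3, cross_apply]

theorem dot3_eq (a b : V3) : dot3 a b = a 0 * b 0 + a 1 * b 1 + a 2 * b 2 := by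
  simp [dot3, Fin.sum_univ_three]

@[simp]
theorem cross3_zero_left (b : V3) : cross3 0 b = 0 := by
  simp [cross3]

@[simp]
theorem cross3_zero_right (a : V3) : cross3 a 0 = 0 := by
  simp [cross3]

section Smoothness

variable {k : WithTop ℕ∞} {f g : V3 → V3}

@[fun_prop]
theorem ContDiff.cross3 (hf : ContDiff ℝ k f) (hg : ContDiff ℝ k g) :
    ContDiff ℝ k fun y => cross3 (f y) (g y) := by
  rw [contDiff_pi]
  intro i
  fin_cases i <;>
  · simp only [Fin.zero_eta, Fin.mk_one, Fin.reduceFinMk, cross3_apply_zero, cross3_apply_one,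
      cross3_apply_two]
    fun_prop

@[fun_prop]
theorem ContDiff.dot3 (hf : ContDiff ℝ k f) (hg : ContDiff ℝ k g) :
    ContDiff ℝ k fun y => dot3 (f y) (g y) := by
  simp only [dot3_eq]
  fun_prop

@[fun_prop]
theorem Continuous.cross3 (hf : Continuous f) (hg : Continuous g) :
    Continuous fun y => cross3 (f y) (g y) :=
  contDiff_zero.mp <| (contDiff_zero.mpr hf).cross3 (contDiff_zero.mpr hg)

@[fun_prop]
theorem Continuous.dot3 (hf : Continuous f) (hg : Continuous g) :
    Continuous fun y => dot3 (f y) (g y) :=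
  contDiff_zero.mp <| (contDiff_zero.mpr hf).dot3 (contDiff_zero.mpr hg)

end Smoothness

section PartialDerivatives

variable {f g : V3 → ℝ} {x : V3} {i : Fin 3}

theorem pd_add (hf : DifferentiableAt ℝ f x) (hg : DifferentiableAt ℝ g x) :
    pd i (fun y => f y + g y) x = pd i f x + pd i g x := by
  simp [pd, fderiv_fun_add hf hg]

theorem pd_sub (hf : DifferentiableAt ℝ f x) (hg : DifferentiableAt ℝ g x) :
    pd i (fun y => f y - g y) x = pd i f x - pd i g x := by
  simp [pd, fderiv_fun_sub hf hg]

theorem pd_mul (hf : DifferentiableAt ℝ f x) (hg : DifferentiableAt ℝ g x) :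
    pd i (fun y => f y * g y) x = f x * pd i g x + pd i f x * g x := by
  simp [pd, fderiv_fun_mul hf hg, mul_comm]

theorem pd_const (c : ℝ) : pd i (fun _ => c) x = 0 := by
  simp [pd]

theorem ContDiff.continuous_pd (hf : ContDiff ℝ 1 f) (i : Fin 3) : Continuous (pd i f) :=
  (hf.continuous_fderiv_apply one_ne_zero).comp (continuous_id.prodMk continuous_const)

theorem pd_eq_zero_of_notMem_tsupport (hx : x ∉ tsupport f) : pd i f x = 0 := by
  simp [pd, fderiv_of_notMem_tsupport ℝ hx]

end PartialDerivatives

section VectorCalculus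

variable {X : V3 → V3} {x : V3}

theorem ContDiff.continuous_pd_apply (hX : ContDiff ℝ 1 X) (i j : Fin 3) :
    Continuous (pd i fun y => X y j) :=
  (contDiff_pi.mp hX j).continuous_pd i

theorem ContDiff.continuous_div3 (hX : ContDiff ℝ 1 X) : Continuous (div3 X) :=
  continuous_finsetSum _ fun i _ => hX.continuous_pd_apply i i

theorem ContDiff.continuous_curl3 (hX : ContDiff ℝ 1 X) : Continuous (curl3 X) := by
  refine continuous_pi fun i => ?_
  fin_cases i <;> exact (hX.continuous_pd_apply _ _).sub (hX.continuous_pd_apply _ _)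

theorem tsupport_apply_subset (i : Fin 3) : tsupport (fun y => X y i) ⊆ tsupport X :=
  closure_mono fun y hy h => hy (by simp [h])

theorem div3_eq_zero_of_notMem_tsupport (hx : x ∉ tsupport X) : div3 X x = 0 :=
  Finset.sum_eq_zero fun i _ =>
    pd_eq_zero_of_notMem_tsupport fun h => hx (tsupport_apply_subset i h)

theorem curl3_eq_zero_of_notMem_tsupport (hx : x ∉ tsupport X) : curl3 X x = 0 := by
  have h (i j : Fin 3) : pd i (fun y => X y j) x = 0 :=
    pd_eq_zero_of_notMem_tsupport fun h => hx (tsupport_apply_subset j h)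
  funext i
  fin_cases i <;> simp [curl3, h]

theorem HasCompactSupport.integral_div3_eq_zero (hX : ContDiff ℝ 1 X)
    (hXs : HasCompactSupport X) :
    ∫ x, div3 X x = 0 := by
  have hXi (i : Fin 3) : HasCompactSupport fun y => X y i :=
    show HasCompactSupport ((fun v : V3 => v i) ∘ X) from hXs.comp_left rfl
  unfold div3 pd
  rw [integral_finsetSum _ fun i _ => (hXi i).integrable_fderiv_apply (contDiff_pi.mp hX i) _]
  exact Finset.sum_eq_zero fun i _ => (hXi i).integral_fderiv_apply_eq_zero (contDiff_pi.mp hX i) _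

end VectorCalculus

def fourthTermDensity (m : V3 → ℝ) (B F G K : V3 → V3) (x : V3) : ℝ :=
  m x * (-(dot3 (B x) (cross3 (F x) (G x))) * div3 K x
    + (1 / 2) * dot3 (B x) (cross3 (K x) (curl3 (fun y => cross3 (F y) (G y)) x))
    + (1 / 2) * dot3 (cross3 (F x) (G x)) (curl3 (fun y => cross3 (B y) (K y)) x))

/-- `div (a × b) = b · curl a - a · curl b` produces the terms `T · curl (B × K)`, `T = F × G`,
and `div (φ B) = φ div B + B · ∇φ` the `div B` term; the remaining terms cancel in the cyclic
sum. -/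
def fourthTermFlux (m : V3 → ℝ) (B F G K : V3 → V3) (y : V3) : V3 :=
  (m y * dot3 (K y) (cross3 (F y) (G y))) • B y
    - (1 / 2 : ℝ) • (cross3 (m y • cross3 (F y) (G y)) (cross3 (B y) (K y))
      + cross3 (m y • cross3 (G y) (K y)) (cross3 (B y) (F y))
      + cross3 (m y • cross3 (K y) (F y)) (cross3 (B y) (G y)))

set_option maxHeartbeats 1000000 in
theorem fourthTermDensity_cyclic_add_eq_div3 {m : V3 → ℝ} {B F G K : V3 → V3} {x : V3}
    (hm : DifferentiableAt ℝ m x) (hB : DifferentiableAt ℝ B x) (hF : DifferentiableAt ℝ F x)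
    (hG : DifferentiableAt ℝ G x) (hK : DifferentiableAt ℝ K x) :
    fourthTermDensity m B F G K x + fourthTermDensity m B G K F x
      + fourthTermDensity m B K F G x + m x * div3 B x * dot3 (K x) (cross3 (F x) (G x))
      = div3 (fourthTermFlux m B F G K) x := by
  simp only [fourthTermDensity, fourthTermFlux, div3, curl3, Fin.sum_univ_three,
    Matrix.cons_val_zero, Matrix.cons_val_one, Matrix.cons_val_two, Matrix.head_cons,
    Matrix.tail_cons, cross3_apply_zero, cross3_apply_one, cross3_apply_two, dot3_eq,
    Pi.smul_apply, Pi.sub_apply, Pi.add_apply, smul_eq_mul]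
  simp (disch := fun_prop) only [pd_sub, pd_add, pd_mul, pd_const]
  ring

theorem tsupport_cross3_subset_left (B K : V3 → V3) :
    tsupport (fun y => cross3 (B y) (K y)) ⊆ tsupport B :=
  closure_mono fun y hy hB => hy (by simp [hB])

theorem tsupport_fourthTermFlux_subset (m : V3 → ℝ) (B F G K : V3 → V3) :
    tsupport (fourthTermFlux m B F G K) ⊆ tsupport B :=
  closure_mono fun y hy hB => hy (by simp [fourthTermFlux, hB])

theorem fourthTermDensity_eq_zero_of_notMem_tsupport (m : V3 → ℝ) {B : V3 → V3}
    (F G K : V3 → V3) {x : V3} (hx : x ∉ tsupport B) : fourthTermDensity m B F G K x = 0 := by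
  have hcurl := curl3_eq_zero_of_notMem_tsupport fun h => hx (tsupport_cross3_subset_left B K h)
  simp [fourthTermDensity, image_eq_zero_of_notMem_tsupport hx, hcurl, dot3]

theorem continuous_fourthTermDensity {m : V3 → ℝ} {B F G K : V3 → V3}
    (hm : ContDiff ℝ 1 m) (hB : ContDiff ℝ 1 B) (hF : ContDiff ℝ 1 F) (hG : ContDiff ℝ 1 G)
    (hK : ContDiff ℝ 1 K) :
    Continuous (fourthTermDensity m B F G K) := by
  have hdivK := hK.continuous_div3
  have hcurlFG := (hF.cross3 hG).continuous_curl3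
  have hcurlBK := (hB.cross3 hK).continuous_curl3
  unfold fourthTermDensity
  fun_prop

theorem contDiff_fourthTermFlux {m : V3 → ℝ} {B F G K : V3 → V3}
    (hm : ContDiff ℝ 1 m) (hB : ContDiff ℝ 1 B) (hF : ContDiff ℝ 1 F) (hG : ContDiff ℝ 1 G)
    (hK : ContDiff ℝ 1 K) :
    ContDiff ℝ 1 (fourthTermFlux m B F G K) := by
  unfold fourthTermFlux
  fun_prop

theorem integral_fourthTermDensity_cyclic {m : V3 → ℝ} {B F G K : V3 → V3} (hm : ContDiff ℝ 1 m)
    (hB : ContDiff ℝ 1 B) (hF : ContDiff ℝ 1 F) (hG : ContDiff ℝ 1 G) (hK : ContDiff ℝ 1 K)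
    (hBs : HasCompactSupport B) :
    (∫ x, fourthTermDensity m B F G K x) + (∫ x, fourthTermDensity m B G K F x)
      + (∫ x, fourthTermDensity m B K F G x)
      = -∫ x, m x * div3 B x * dot3 (K x) (cross3 (F x) (G x)) := by
  have integrable_of_eq_zero {f : V3 → ℝ} (hf : Continuous f) (h : ∀ x ∉ tsupport B, f x = 0) :
      Integrable f :=
    hf.integrable_of_hasCompactSupport (.intro hBs h)
  have hFGK := integrable_of_eq_zero (continuous_fourthTermDensity hm hB hF hG hK)
    fun _ => fourthTermDensity_eq_zero_of_notMem_tsupport m F G K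
  have hGKF := integrable_of_eq_zero (continuous_fourthTermDensity hm hB hG hK hF)
    fun _ => fourthTermDensity_eq_zero_of_notMem_tsupport m G K F
  have hKFG := integrable_of_eq_zero (continuous_fourthTermDensity hm hB hK hF hG)
    fun _ => fourthTermDensity_eq_zero_of_notMem_tsupport m K F G
  have hdivB : Integrable fun x => m x * div3 B x * dot3 (K x) (cross3 (F x) (G x)) :=
    integrable_of_eq_zero (by have := hB.continuous_div3; fun_prop) fun x hx => by
      simp [div3_eq_zero_of_notMem_tsupport hx]
  have hflux := contDiff_fourthTermFlux hm hB hF hG hK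
  have hfluxs : HasCompactSupport (fourthTermFlux m B F G K) :=
    hBs.of_isClosed_subset (isClosed_tsupport _) (tsupport_fourthTermFlux_subset m B F G K)
  have hdivflux : Integrable (div3 (fourthTermFlux m B F G K)) :=
    hflux.continuous_div3.integrable_of_hasCompactSupport
      (.intro hfluxs fun _ => div3_eq_zero_of_notMem_tsupport)
  calc (∫ x, fourthTermDensity m B F G K x) + (∫ x, fourthTermDensity m B G K F x)
        + (∫ x, fourthTermDensity m B K F G x)
      = ∫ x, fourthTermDensity m B F G K x + fourthTermDensity m B G K F x
          + fourthTermDensity m B K F G x := by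
        rw [← integral_add hFGK hGKF, ← integral_add _ hKFG]
        exact hFGK.add hGKF
    _ = ∫ x, div3 (fourthTermFlux m B F G K) x
          - m x * div3 B x * dot3 (K x) (cross3 (F x) (G x)) := by
        congr 1 with x
        rw [← fourthTermDensity_cyclic_add_eq_div3 (hm.differentiable one_ne_zero x)
          (hB.differentiable one_ne_zero x) (hF.differentiable one_ne_zero x)
          (hG.differentiable one_ne_zero x) (hK.differentiable one_ne_zero x), add_sub_cancel_right]
    _ = -∫ x, m x * div3 B x * dot3 (K x) (cross3 (F x) (G x)) := by
        rw [integral_sub hdivflux hdivB, hfluxs.integral_div3_eq_zero hflux, zero_sub]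

theorem fourth_term_identity_general (n : V3 → ℝ) (hn : ContDiff ℝ (⊤ : ℕ∞) n)
    (hnpos : ∀ x, 0 < n x)
    (B F G K : V3 → V3)
    (hB : ContDiff ℝ (⊤ : ℕ∞) B) (hF : ContDiff ℝ (⊤ : ℕ∞) F)
    (hG : ContDiff ℝ (⊤ : ℕ∞) G) (hK : ContDiff ℝ (⊤ : ℕ∞) K)
    (hBs : HasCompactSupport B) :
    S16 n B F G K + S16 n B G K F + S16 n B K F G
      = - ∫ x, (1 / (n x) ^ 2) * div3 B x * dot3 (K x) (cross3 (F x) (G x)) := by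
  have hm : ContDiff ℝ 1 fun x => 1 / n x ^ 2 :=
    (contDiff_const.div (hn.pow 2) fun x => pow_ne_zero 2 (hnpos x).ne').of_le (by simp)
  exact integral_fourthTermDensity_cyclic hm (hB.of_le (by simp)) (hF.of_le (by simp))
    (hG.of_le (by simp)) (hK.of_le (by simp)) hBs

/-- The cyclic sum of the fourth-term integrals equals the div B obstruction. -/
theorem fourth_term_identity (n : V3 → ℝ) (hn : ContDiff ℝ (⊤ : ℕ∞) n)
    (hnpos : ∀ x, 0 < n x)
    (B F G K : V3 → V3)
    (hB : ContDiff ℝ (⊤ : ℕ∞) B) (hF : ContDiff ℝ (⊤ : ℕ∞) F)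
    (hG : ContDiff ℝ (⊤ : ℕ∞) G) (hK : ContDiff ℝ (⊤ : ℕ∞) K)
    (hBs : HasCompactSupport B) (hFs : HasCompactSupport F)
    (hGs : HasCompactSupport G) (hKs : HasCompactSupport K) :
    S16 n B F G K + S16 n B G K F + S16 n B K F G
      = - ∫ x, (1 / (n x) ^ 2) * div3 B x * dot3 (K x) (cross3 (F x) (G x)) :=
  fourth_term_identity_general n hn hnpos B F G K hB hF hG hK hBs
end
end
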